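/- arXiv:2010.14780 — 2 statements merged into one kernel-verified Lean document; each statement's English description precedes it below -/
import Mathlib

section
/- Let n ≥ 1 and w ∈ S_n. If s_{i_1}⋯s_{i_r} and s_{j_1}⋯s_{j_r} are two reduced words for w (i.e., products of adjacent transpositions with r = ℓ(w), the inversion number of w), then the compositions of Demazure operators ∂_{i_1}∘⋯∘∂_{i_r} and ∂_{j_1}∘⋯∘∂_{j_r} on ℚ[x_1,…,x_n] are equal. Hence the operator ∂_w is well defined independently of the chosen reduced word. -/
/-
Both composites are products, in the monoid of operators, of the images of the letters, so it
suffices that (1) the operators `∂ᵢ` satisfy the braid relations `∂ᵢ∂ⱼ = ∂ⱼ∂ᵢ` for `|i - j| > 1`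
and `∂ᵢ∂ᵢ₊₁∂ᵢ = ∂ᵢ₊₁∂ᵢ∂ᵢ₊₁`, and (2) any map from the letters to a monoid satisfying these
relations takes the same value on all reduced words of `w`.

(1) Inside the fraction field, `∂_{ab} g = (g - s_{ab} g) / (x_a - x_b)`, and both relations
become identities of rational functions once the permutations are composed.

(2) Induct on `ℓ(w)`. Reduced words of `w` with the same first letter `k` agree by induction
applied to `s_k w`. If they start with `i ≠ j`, then `s_i` and `s_j` are both left descents of `w`,
i.e. `w⁻¹(i + 1) < w⁻¹(i)` and likewise for `j`; then `w` also has reduced words starting with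
`i j` and `j i` (if `|i - j| > 1`) or with `i (i+1) i` and `(i+1) i (i+1)` (if `j = i + 1`)
sharing a common tail, and one braid relation links them.
-/

open MvPolynomial
open scoped Classical

/-- The Coxeter length of a permutation of `Fin n`, i.e. its number of inversions. -/
def permLen {n : ℕ} (w : Equiv.Perm (Fin n)) : ℕ :=
  (Finset.univ.filter (fun p : Fin n × Fin n => p.1 < p.2 ∧ w p.2 < w p.1)).card

/-- The adjacent transposition `s_i` exchanging the `i`-th and `(i+1)`-th letters
(zero-indexed); junk value `1` if out of range. -/
def adjSwap (n : ℕ) (i : ℕ) : Equiv.Perm (Fin n) :=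
  if h : i + 1 < n then Equiv.swap ⟨i, Nat.lt_of_succ_lt h⟩ ⟨i + 1, h⟩ else 1

/-- The longest element `w₀` of the symmetric group on `Fin n`, `i ↦ n - 1 - i`
(one-indexed: `i ↦ n + 1 - i`). -/
def w0 (n : ℕ) : Equiv.Perm (Fin n) := Fin.revPerm

/-- The Demazure (divided difference) operator with respect to a pair of variables `i j`:
`f ↦ (f - swap(i,j)·f) / (Xᵢ - Xⱼ)`.  The difference is always divisible by `Xᵢ - Xⱼ`
(for `i ≠ j`), and the quotient is unique since the polynomial ring is a domain, so the
definition by choice below produces exactly this quotient. -/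
noncomputable def demazure {σ : Type} [DecidableEq σ] (i j : σ)
    (f : MvPolynomial σ ℚ) : MvPolynomial σ ℚ :=
  if h : ∃ g, f - rename (Equiv.swap i j) f = (X i - X j) * g then h.choose else 0

/-- The Demazure operator `∂ᵢ` on `ℚ[x₀, …, x_{n-1}]` (zero-indexed). -/
noncomputable def demAt (n : ℕ) (i : ℕ) :
    MvPolynomial (Fin n) ℚ → MvPolynomial (Fin n) ℚ :=
  if h : i + 1 < n then demazure ⟨i, Nat.lt_of_succ_lt h⟩ ⟨i + 1, h⟩ else fun _ => 0

/-- The composite Demazure operator `∂_{i₁} ∘ ⋯ ∘ ∂_{i_r}` along a word `l = [i₁, …, i_r]`. -/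
noncomputable def demWord (n : ℕ) (l : List ℕ) :
    MvPolynomial (Fin n) ℚ → MvPolynomial (Fin n) ℚ :=
  l.foldr (fun i op => demAt n i ∘ op) id

/-- `l = [i₁, …, i_r]` is a reduced word for `w` if all letters are in range,
`s_{i₁} ⋯ s_{i_r} = w`, and `r = ℓ(w)` is the number of inversions of `w`. -/
def IsReducedWord (n : ℕ) (w : Equiv.Perm (Fin n)) (l : List ℕ) : Prop :=
  (∀ i ∈ l, i + 1 < n) ∧ (l.map (adjSwap n)).prod = w ∧ l.length = permLen w

/-- The Demazure operator `∂_w`, defined along a chosen reduced word of `w`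
(the result is independent of this choice). -/
noncomputable def demazureOf (n : ℕ) (w : Equiv.Perm (Fin n)) :
    MvPolynomial (Fin n) ℚ → MvPolynomial (Fin n) ℚ :=
  if h : ∃ l, IsReducedWord n w l then demWord n h.choose else fun _ => 0

/-- The Demazure operator `∂ᵢˣ` acting on the `x`-variables (the left summand) of
`ℚ[x₁, …, xₙ, t₁, …, tₙ]`. -/
noncomputable def demAtX (n : ℕ) (i : ℕ) :
    MvPolynomial (Fin n ⊕ Fin n) ℚ → MvPolynomial (Fin n ⊕ Fin n) ℚ :=
  if h : i + 1 < n then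
    demazure (Sum.inl ⟨i, Nat.lt_of_succ_lt h⟩) (Sum.inl ⟨i + 1, h⟩) else fun _ => 0

/-- Composite of `x`-variable Demazure operators along a word. -/
noncomputable def demWordX (n : ℕ) (l : List ℕ) :
    MvPolynomial (Fin n ⊕ Fin n) ℚ → MvPolynomial (Fin n ⊕ Fin n) ℚ :=
  l.foldr (fun i op => demAtX n i ∘ op) id

/-- The Demazure operator `∂_wˣ` in the `x`-variables, along a chosen reduced word of `w`. -/
noncomputable def demazureOfX (n : ℕ) (w : Equiv.Perm (Fin n)) :
    MvPolynomial (Fin n ⊕ Fin n) ℚ → MvPolynomial (Fin n ⊕ Fin n) ℚ :=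
  if h : ∃ l, IsReducedWord n w l then demWordX n h.choose else fun _ => 0

/-- The top product `∏_{i + j ≤ n} (xᵢ - tⱼ)` (one-indexed), i.e. the double Schubert
polynomial of the longest element. -/
noncomputable def schubProd (n : ℕ) : MvPolynomial (Fin n ⊕ Fin n) ℚ :=
  ∏ p ∈ Finset.univ.filter (fun p : Fin n × Fin n => (p.1 : ℕ) + (p.2 : ℕ) + 2 ≤ n),
    (X (Sum.inl p.1) - X (Sum.inr p.2))

/-- The double Schubert polynomial `𝔖_w(x, t) = ∂ˣ_{w⁻¹w₀} (∏_{i+j≤n} (xᵢ - tⱼ))`. -/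
noncomputable def schubert (n : ℕ) (w : Equiv.Perm (Fin n)) :
    MvPolynomial (Fin n ⊕ Fin n) ℚ :=
  demazureOfX n (w⁻¹ * w0 n) (schubProd n)

section Swap

variable {α : Type*} [DecidableEq α]

theorem swap_mul_swap_comm {a b c d : α} (hac : a ≠ c) (had : a ≠ d) (hbc : b ≠ c)
    (hbd : b ≠ d) : Equiv.swap a b * Equiv.swap c d = Equiv.swap c d * Equiv.swap a b := by
  rw [← mul_inv_eq_iff_eq_mul, ← Equiv.swap_apply_apply,
    Equiv.swap_apply_of_ne_of_ne hac.symm hbc.symm, Equiv.swap_apply_of_ne_of_ne had.symm hbd.symm]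

theorem swap_braid {a b c : α} (hab : a ≠ b) (hbc : b ≠ c) (hac : a ≠ c) :
    Equiv.swap a b * Equiv.swap b c * Equiv.swap a b =
      Equiv.swap b c * Equiv.swap a b * Equiv.swap b c := by
  rw [Equiv.swap_mul_swap_mul_swap hab hac, Equiv.swap_comm a b, Equiv.swap_comm b c,
    Equiv.swap_mul_swap_mul_swap hbc.symm hac.symm, Equiv.swap_comm]

end Swap

theorem X_sub_X_dvd_sub_rename_swap {R σ : Type*} [CommRing R] [DecidableEq σ] (i j : σ)
    (f : MvPolynomial σ R) : X i - X j ∣ f - rename (Equiv.swap i j) f := by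
  let π := Ideal.Quotient.mk (Ideal.span {(X i - X j : MvPolynomial σ R)})
  have hX : π (X i) = π (X j) :=
    Ideal.Quotient.eq.mpr (Ideal.mem_span_singleton_self _)
  have hπ : π.comp (rename (Equiv.swap i j)).toRingHom = π := by
    refine MvPolynomial.ringHom_ext (fun r => by simp) fun k => ?_
    simp only [RingHom.comp_apply, AlgHom.toRingHom_eq_coe, RingHom.coe_coe, rename_X]
    rcases eq_or_ne k i with rfl | hki
    · rw [Equiv.swap_apply_left, hX]
    rcases eq_or_ne k j with rfl | hkj
    · rw [Equiv.swap_apply_right, hX]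
    · rw [Equiv.swap_apply_of_ne_of_ne hki hkj]
  rw [← Ideal.mem_span_singleton, ← Ideal.Quotient.eq]
  exact (congrArg (· f) hπ).symm

section DividedDifference

variable {σ : Type}

local notation "K" => FractionRing (MvPolynomial σ ℚ)
local notation "ι" => algebraMap (MvPolynomial σ ℚ) K

noncomputable def permFrac (e : Equiv.Perm σ) : K ≃+* K :=
  IsFractionRing.ringEquivOfRingEquiv (renameEquiv ℚ e).toRingEquiv

theorem permFrac_algebraMap (e : Equiv.Perm σ) (f : MvPolynomial σ ℚ) :
    permFrac e (ι f) = ι (rename e f) :=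
  IsFractionRing.ringEquivOfRingEquiv_algebraMap _ f

theorem permFrac_permFrac (e e' : Equiv.Perm σ) (g : K) :
    permFrac e (permFrac e' g) = permFrac (e * e') g := by
  have : (renameEquiv ℚ e').toRingEquiv.trans (renameEquiv ℚ e).toRingEquiv =
      (renameEquiv ℚ (e * e')).toRingEquiv := by
    ext f
    simp [rename_rename]
  rw [permFrac, permFrac, permFrac, ← RingEquiv.trans_apply,
    ← IsFractionRing.ringEquivOfRingEquiv_comp, this]

theorem permFrac_one (g : K) : permFrac 1 g = g := by
  rw [permFrac, show renameEquiv ℚ (1 : Equiv.Perm σ) = AlgEquiv.refl from renameEquiv_refl ℚ]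
  exact DFunLike.congr_fun IsFractionRing.ringEquivOfRingEquiv_refl g

theorem permFrac_X (e : Equiv.Perm σ) (i : σ) : permFrac e (ι (X i)) = ι (X (e i)) := by
  simp only [permFrac_algebraMap, rename_X]

theorem algebraMap_X_sub_X_ne_zero {a b : σ} (hab : a ≠ b) : ι (X a) - ι (X b) ≠ 0 := by
  rw [sub_ne_zero, (IsFractionRing.injective _ K).ne_iff]
  exact fun h => hab (X_injective h)

variable [DecidableEq σ]

noncomputable def divDiff (a b : σ) (g : K) : K :=
  (ι (X a) - ι (X b))⁻¹ * (g - permFrac (Equiv.swap a b) g)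

theorem sub_rename_swap_eq_mul_demazure (i j : σ) (f : MvPolynomial σ ℚ) :
    f - rename (Equiv.swap i j) f = (X i - X j) * demazure i j f := by
  have h : ∃ g, f - rename (Equiv.swap i j) f = (X i - X j) * g :=
    X_sub_X_dvd_sub_rename_swap i j f
  rw [demazure, dif_pos h]
  exact h.choose_spec

theorem algebraMap_demazure {a b : σ} (hab : a ≠ b) (f : MvPolynomial σ ℚ) :
    ι (demazure a b f) = divDiff a b (ι f) := by
  have h := congrArg ι (sub_rename_swap_eq_mul_demazure a b f)
  rw [map_sub, map_mul, map_sub, ← permFrac_algebraMap] at h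
  rw [divDiff, h, inv_mul_cancel_left₀ (algebraMap_X_sub_X_ne_zero hab)]

theorem divDiff_comm {a b c d : σ} (hac : a ≠ c) (had : a ≠ d) (hbc : b ≠ c) (hbd : b ≠ d)
    (g : K) : divDiff a b (divDiff c d g) = divDiff c d (divDiff a b g) := by
  have hc : Equiv.swap a b c = c := Equiv.swap_apply_of_ne_of_ne hac.symm hbc.symm
  have hd : Equiv.swap a b d = d := Equiv.swap_apply_of_ne_of_ne had.symm hbd.symm
  have ha : Equiv.swap c d a = a := Equiv.swap_apply_of_ne_of_ne hac had
  have hb : Equiv.swap c d b = b := Equiv.swap_apply_of_ne_of_ne hbc hbd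
  simp only [divDiff, map_mul, map_inv₀, map_sub, permFrac_permFrac, permFrac_X,
    swap_mul_swap_comm hac had hbc hbd, hc, hd, ha, hb]
  ring

theorem divDiff_braid {a b c : σ} (hab : a ≠ b) (hbc : b ≠ c) (hac : a ≠ c) (g : K) :
    divDiff a b (divDiff b c (divDiff a b g)) = divDiff b c (divDiff a b (divDiff b c g)) := by
  have hc : Equiv.swap a b c = c := Equiv.swap_apply_of_ne_of_ne hac.symm hbc.symm
  have ha : Equiv.swap b c a = a := Equiv.swap_apply_of_ne_of_ne hab hac
  simp only [divDiff, map_mul, map_inv₀, map_sub, permFrac_permFrac, permFrac_X, ← mul_assoc,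
    swap_braid hab hbc hac, Equiv.swap_mul_self, permFrac_one, Equiv.swap_apply_left,
    Equiv.swap_apply_right, hc, ha]
  have := algebraMap_X_sub_X_ne_zero hab
  have := algebraMap_X_sub_X_ne_zero hbc
  have := algebraMap_X_sub_X_ne_zero hac
  have := algebraMap_X_sub_X_ne_zero hab.symm
  have := algebraMap_X_sub_X_ne_zero hbc.symm
  field_simp
  ring

theorem demazure_comm {a b c d : σ} (hab : a ≠ b) (hcd : c ≠ d) (hac : a ≠ c) (had : a ≠ d)
    (hbc : b ≠ c) (hbd : b ≠ d) (f : MvPolynomial σ ℚ) :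
    demazure a b (demazure c d f) = demazure c d (demazure a b f) :=
  IsFractionRing.injective _ K <| by
    simp only [algebraMap_demazure hab, algebraMap_demazure hcd, divDiff_comm hac had hbc hbd]

theorem demazure_braid {a b c : σ} (hab : a ≠ b) (hbc : b ≠ c) (hac : a ≠ c)
    (f : MvPolynomial σ ℚ) :
    demazure a b (demazure b c (demazure a b f)) = demazure b c (demazure a b (demazure b c f)) :=
  IsFractionRing.injective _ K <| by
    simp only [algebraMap_demazure hab, algebraMap_demazure hbc, divDiff_braid hab hbc hac]

end DividedDifference

section ReducedWords

variable {n : ℕ}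

theorem adjSwap_of_lt {i : ℕ} (hi : i + 1 < n) :
    adjSwap n i = Equiv.swap ⟨i, Nat.lt_of_succ_lt hi⟩ ⟨i + 1, hi⟩ :=
  dif_pos hi

theorem adjSwap_mul_self {i : ℕ} (hi : i + 1 < n) : adjSwap n i * adjSwap n i = 1 := by
  rw [adjSwap_of_lt hi, Equiv.swap_mul_self]

def inversions (w : Equiv.Perm (Fin n)) : Finset (Fin n × Fin n) :=
  Finset.univ.filter (fun p : Fin n × Fin n => p.1 < p.2 ∧ w p.2 < w p.1)

theorem permLen_eq_card_inversions (w : Equiv.Perm (Fin n)) :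
    permLen w = (inversions w).card :=
  rfl

theorem mem_inversions {w : Equiv.Perm (Fin n)} {p : Fin n × Fin n} :
    p ∈ inversions w ↔ p.1 < p.2 ∧ w p.2 < w p.1 := by
  simp [inversions]

theorem permLen_one : permLen (1 : Equiv.Perm (Fin n)) = 0 :=
  Finset.card_eq_zero.mpr (Finset.filter_false_of_mem fun _ _ h => lt_asymm h.1 h.2)

/-- `w⁻¹ k` as a natural number, extended by the identity beyond `n`, so that descent
computations become arithmetic in `ℕ`. -/
def invPos (w : Equiv.Perm (Fin n)) (k : ℕ) : ℕ :=
  if h : k < n then w⁻¹ ⟨k, h⟩ else k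

theorem invPos_of_lt (w : Equiv.Perm (Fin n)) {k : ℕ} (h : k < n) :
    invPos w k = w⁻¹ ⟨k, h⟩ :=
  dif_pos h

theorem invPos_adjSwap_mul {i : ℕ} (hi : i + 1 < n) (w : Equiv.Perm (Fin n)) (k : ℕ) :
    invPos (adjSwap n i * w) k = invPos w (Equiv.swap i (i + 1) k) := by
  by_cases hk : k < n
  · have hk' : Equiv.swap i (i + 1) k < n := by
      rw [Equiv.swap_apply_def]; split_ifs <;> omega
    rw [invPos_of_lt _ hk, invPos_of_lt _ hk', mul_inv_rev, Equiv.Perm.mul_apply,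
      adjSwap_of_lt hi, Equiv.swap_inv]
    congr 2
    ext
    simp only [Equiv.swap_apply_def, Fin.ext_iff]
    split_ifs <;> simp_all
  · have : Equiv.swap i (i + 1) k = k := Equiv.swap_apply_of_ne_of_ne (by omega) (by omega)
    rw [this, invPos, invPos, dif_neg hk, dif_neg hk]

theorem invPos_ne_invPos_succ (w : Equiv.Perm (Fin n)) {i : ℕ} (hi : i + 1 < n) :
    invPos w i ≠ invPos w (i + 1) := by
  rw [invPos_of_lt _ hi, invPos_of_lt _ (Nat.lt_of_succ_lt hi)]
  exact Fin.val_ne_of_ne (w⁻¹.injective.ne (by simp))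

def IsLeftDescent (w : Equiv.Perm (Fin n)) (i : ℕ) : Prop :=
  i + 1 < n ∧ invPos w (i + 1) < invPos w i

theorem isLeftDescent_adjSwap_mul_self_iff {w : Equiv.Perm (Fin n)} {i : ℕ} (hi : i + 1 < n) :
    IsLeftDescent (adjSwap n i * w) i ↔ ¬ IsLeftDescent w i := by
  have := invPos_ne_invPos_succ w hi
  simp only [IsLeftDescent, invPos_adjSwap_mul hi, Equiv.swap_apply_left,
    Equiv.swap_apply_right, hi, true_and]
  omega

theorem lt_iff_of_swap_adjacent {a b x y : Fin n} (hab : (a : ℕ) + 1 = b)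
    (hxy : ¬ (x = b ∧ y = a)) :
    x < y ↔ (x = a ∧ y = b) ∨ Equiv.swap a b x < Equiv.swap a b y := by
  simp only [Equiv.swap_apply_def, Fin.ext_iff, Fin.lt_def] at *
  split_ifs <;> omega

theorem notMem_inversions_swap_mul {a b : Fin n} (hab : (a : ℕ) + 1 = b)
    (w : Equiv.Perm (Fin n)) : (w⁻¹ b, w⁻¹ a) ∉ inversions (Equiv.swap a b * w) := by
  simp only [mem_inversions, Equiv.Perm.mul_apply, Equiv.Perm.coe_inv, Equiv.apply_symm_apply,
    Equiv.swap_apply_left, Equiv.swap_apply_right, not_and, not_lt]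
  exact fun _ => Fin.le_def.mpr (by omega)

theorem inversions_eq_insert_swap_mul {a b : Fin n} (hab : (a : ℕ) + 1 = b)
    {w : Equiv.Perm (Fin n)} (hlt : w⁻¹ b < w⁻¹ a) :
    inversions w = insert (w⁻¹ b, w⁻¹ a) (inversions (Equiv.swap a b * w)) := by
  ext ⟨p, q⟩
  simp only [Finset.mem_insert, mem_inversions, Prod.mk.injEq, Equiv.Perm.mul_apply,
    Equiv.Perm.eq_inv_iff_eq]
  have hswap {x y : Fin n} (hxy : ¬ (x = b ∧ y = a)) := lt_iff_of_swap_adjacent hab hxy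
  have hnot (hpq : p < q) : ¬ (w q = b ∧ w p = a) := by
    rintro ⟨hq, hp⟩
    rw [← Equiv.Perm.eq_inv_iff_eq] at hp hq
    exact lt_asymm hlt (hp ▸ hq ▸ hpq)
  constructor
  · rintro ⟨hpq, hwqp⟩
    rcases (hswap (hnot hpq)).mp hwqp with ⟨hq, hp⟩ | h
    · exact Or.inl ⟨hp, hq⟩
    · exact Or.inr ⟨hpq, h⟩
  · rintro (⟨hp, hq⟩ | ⟨hpq, h⟩)
    · refine ⟨?_, by rw [hp, hq, Fin.lt_def, ← hab]; exact Nat.lt_succ_self _⟩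
      rwa [Equiv.Perm.eq_inv_iff_eq.mpr hp, Equiv.Perm.eq_inv_iff_eq.mpr hq]
    · exact ⟨hpq, (hswap (hnot hpq)).mpr (Or.inr h)⟩

theorem permLen_adjSwap_mul_add_one {w : Equiv.Perm (Fin n)} {i : ℕ} (hd : IsLeftDescent w i) :
    permLen (adjSwap n i * w) + 1 = permLen w := by
  obtain ⟨hi, hlt⟩ := hd
  rw [invPos_of_lt w hi, invPos_of_lt w (Nat.lt_of_succ_lt hi), ← Fin.lt_def] at hlt
  rw [permLen_eq_card_inversions, permLen_eq_card_inversions, adjSwap_of_lt hi,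
    inversions_eq_insert_swap_mul rfl hlt,
    Finset.card_insert_of_notMem (notMem_inversions_swap_mul rfl w)]

theorem permLen_adjSwap_mul_of_not_isLeftDescent {w : Equiv.Perm (Fin n)} {i : ℕ}
    (hi : i + 1 < n) (hd : ¬ IsLeftDescent w i) :
    permLen (adjSwap n i * w) = permLen w + 1 := by
  have := permLen_adjSwap_mul_add_one ((isLeftDescent_adjSwap_mul_self_iff hi).mpr hd)
  rwa [← mul_assoc, adjSwap_mul_self hi, one_mul, eq_comm] at this

theorem permLen_adjSwap_mul_le (w : Equiv.Perm (Fin n)) (i : ℕ) :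
    permLen (adjSwap n i * w) ≤ permLen w + 1 := by
  by_cases hi : i + 1 < n
  · by_cases hd : IsLeftDescent w i
    · have := permLen_adjSwap_mul_add_one hd; omega
    · exact (permLen_adjSwap_mul_of_not_isLeftDescent hi hd).le
  · simp [adjSwap, hi]

theorem permLen_prod_map_adjSwap_le (l : List ℕ) :
    permLen (l.map (adjSwap n)).prod ≤ l.length := by
  induction l with
  | nil => simp [permLen_one]
  | cons i t ih =>
    have := permLen_adjSwap_mul_le (t.map (adjSwap n)).prod i
    simp only [List.map_cons, List.prod_cons, List.length_cons]
    omega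

theorem isReducedWord_cons_iff {w : Equiv.Perm (Fin n)} {i : ℕ} {t : List ℕ} :
    IsReducedWord n w (i :: t) ↔ IsLeftDescent w i ∧ IsReducedWord n (adjSwap n i * w) t := by
  constructor
  · rintro ⟨hrange, hprod, hlen⟩
    have hi : i + 1 < n := hrange i List.mem_cons_self
    have htprod : (t.map (adjSwap n)).prod = adjSwap n i * w := by
      rw [← hprod, List.map_cons, List.prod_cons, ← mul_assoc, adjSwap_mul_self hi, one_mul]
    have hle := htprod ▸ permLen_prod_map_adjSwap_le (n := n) t
    have hd : IsLeftDescent w i := by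
      by_contra hd
      have := permLen_adjSwap_mul_of_not_isLeftDescent hi hd
      simp only [List.length_cons] at hlen
      omega
    have := permLen_adjSwap_mul_add_one hd
    simp only [List.length_cons] at hlen
    exact ⟨hd, fun j hj => hrange j (List.mem_cons_of_mem i hj), htprod, by omega⟩
  · rintro ⟨hd, hrange, hprod, hlen⟩
    have := permLen_adjSwap_mul_add_one hd
    refine ⟨List.forall_mem_cons.mpr ⟨hd.1, hrange⟩, ?_,
      by simp only [List.length_cons]; omega⟩
    rw [List.map_cons, List.prod_cons, hprod, ← mul_assoc, adjSwap_mul_self hd.1, one_mul]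

theorem exists_isLeftDescent {w : Equiv.Perm (Fin n)} (hw : w ≠ 1) :
    ∃ i, IsLeftDescent w i := by
  by_contra! hno
  apply hw
  obtain _ | m := n
  · exact Subsingleton.elim _ _
  have hmono : StrictMono ⇑w⁻¹ := by
    refine Fin.strictMono_iff_lt_succ.mpr fun k => ?_
    have hk : (k : ℕ) + 1 < m + 1 := by omega
    show w⁻¹ ⟨k, Nat.lt_of_succ_lt hk⟩ < w⁻¹ ⟨k + 1, hk⟩
    have hne := invPos_ne_invPos_succ w hk
    have hle := hno k
    simp only [IsLeftDescent, hk, true_and, not_lt] at hle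
    rw [invPos_of_lt w hk, invPos_of_lt w (Nat.lt_of_succ_lt hk)] at hne hle
    exact Fin.lt_def.mpr (by omega)
  have hid (k : Fin (m + 1)) : w⁻¹ k = k :=
    Fin.ext (Fin.coe_orderIso_apply (hmono.orderIsoOfSurjective _ w⁻¹.surjective) k)
  exact inv_eq_one.mp (Equiv.ext hid)

theorem exists_isReducedWord (w : Equiv.Perm (Fin n)) : ∃ l, IsReducedWord n w l := by
  induction h : permLen w using Nat.strong_induction_on generalizing w with
  | _ r ih =>
  by_cases hw : w = 1
  · exact ⟨[], by simp [IsReducedWord, hw, permLen_one]⟩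
  obtain ⟨i, hi⟩ := exists_isLeftDescent hw
  have := permLen_adjSwap_mul_add_one hi
  obtain ⟨t, ht⟩ := ih _ (by omega) (adjSwap n i * w) rfl
  exact ⟨i :: t, isReducedWord_cons_iff.mpr ⟨hi, ht⟩⟩

end ReducedWords

section BraidMoves

variable {n : ℕ} {w : Equiv.Perm (Fin n)} {i j : ℕ}

theorem adjSwap_mul_comm (hij : i + 1 < j) (hj : j + 1 < n) :
    adjSwap n i * adjSwap n j = adjSwap n j * adjSwap n i := by
  rw [adjSwap_of_lt (by omega : i + 1 < n), adjSwap_of_lt hj]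
  exact swap_mul_swap_comm (by grind) (by grind) (by grind) (by grind)

theorem adjSwap_braid (hi : i + 2 < n) :
    adjSwap n i * adjSwap n (i + 1) * adjSwap n i =
      adjSwap n (i + 1) * adjSwap n i * adjSwap n (i + 1) := by
  rw [adjSwap_of_lt (by omega : i + 1 < n), adjSwap_of_lt hi]
  exact swap_braid (by grind) (by grind) (by grind)

theorem IsLeftDescent.adjSwap_mul_of_far (hj : IsLeftDescent w j) (hi : i + 1 < n)
    (hij : i + 1 < j ∨ j + 1 < i) : IsLeftDescent (adjSwap n i * w) j := by
  refine ⟨hj.1, ?_⟩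
  rw [invPos_adjSwap_mul hi, invPos_adjSwap_mul hi,
    Equiv.swap_apply_of_ne_of_ne (by omega) (by omega),
    Equiv.swap_apply_of_ne_of_ne (by omega) (by omega)]
  exact hj.2

theorem exists_isReducedWord_comm (hij : i + 1 < j) (hi : IsLeftDescent w i)
    (hj : IsLeftDescent w j) :
    ∃ t, IsReducedWord n w (i :: j :: t) ∧ IsReducedWord n w (j :: i :: t) := by
  obtain ⟨t, ht⟩ := exists_isReducedWord (adjSwap n j * (adjSwap n i * w))
  have hcomm : adjSwap n j * (adjSwap n i * w) = adjSwap n i * (adjSwap n j * w) := by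
    rw [← mul_assoc, ← mul_assoc, adjSwap_mul_comm hij hj.1]
  refine ⟨t, ?_, ?_⟩
  · exact isReducedWord_cons_iff.mpr ⟨hi, isReducedWord_cons_iff.mpr
      ⟨hj.adjSwap_mul_of_far hi.1 (Or.inl hij), ht⟩⟩
  · exact isReducedWord_cons_iff.mpr ⟨hj, isReducedWord_cons_iff.mpr
      ⟨hi.adjSwap_mul_of_far hj.1 (Or.inr hij), hcomm ▸ ht⟩⟩

theorem exists_isReducedWord_braid (hi : IsLeftDescent w i) (hj : IsLeftDescent w (i + 1)) :
    ∃ t, IsReducedWord n w (i :: (i + 1) :: i :: t) ∧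
      IsReducedWord n w ((i + 1) :: i :: (i + 1) :: t) := by
  obtain ⟨hi', hlt_i⟩ := hi
  obtain ⟨hj', hlt_j⟩ := hj
  obtain ⟨t, ht⟩ := exists_isReducedWord (adjSwap n i * (adjSwap n (i + 1) * (adjSwap n i * w)))
  have hbraid : adjSwap n i * (adjSwap n (i + 1) * (adjSwap n i * w)) =
      adjSwap n (i + 1) * (adjSwap n i * (adjSwap n (i + 1) * w)) := by
    simp only [← mul_assoc, adjSwap_braid hj']
  refine ⟨t, ?_, ?_⟩
  · refine isReducedWord_cons_iff.mpr ⟨⟨hi', hlt_i⟩, isReducedWord_cons_iff.mpr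
      ⟨⟨hj', ?_⟩, isReducedWord_cons_iff.mpr ⟨⟨hi', ?_⟩, ht⟩⟩⟩
    all_goals simp (disch := omega) only [invPos_adjSwap_mul, Equiv.swap_apply_left,
      Equiv.swap_apply_right, Equiv.swap_apply_of_ne_of_ne]
    all_goals omega
  · refine isReducedWord_cons_iff.mpr ⟨⟨hj', hlt_j⟩, isReducedWord_cons_iff.mpr
      ⟨⟨hi', ?_⟩, isReducedWord_cons_iff.mpr ⟨⟨hj', ?_⟩, hbraid ▸ ht⟩⟩⟩
    all_goals simp (disch := omega) only [invPos_adjSwap_mul, Equiv.swap_apply_left,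
      Equiv.swap_apply_right, Equiv.swap_apply_of_ne_of_ne]
    all_goals omega

end BraidMoves

section WordProperty

variable {M : Type*} [Monoid M] {n : ℕ}

theorem prod_map_eq_of_isReducedWord (f : ℕ → M)
    (hcomm : ∀ i j, i + 1 < j → j + 1 < n → f i * f j = f j * f i)
    (hbraid : ∀ i, i + 2 < n → f i * f (i + 1) * f i = f (i + 1) * f i * f (i + 1))
    {w : Equiv.Perm (Fin n)} {l₁ l₂ : List ℕ} (h₁ : IsReducedWord n w l₁)
    (h₂ : IsReducedWord n w l₂) : (l₁.map f).prod = (l₂.map f).prod := by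
  induction hw : permLen w using Nat.strong_induction_on generalizing w l₁ l₂ with
  | _ r ih =>
  have sameFirst (k : ℕ) {u₁ u₂ : List ℕ} (hu₁ : IsReducedWord n w (k :: u₁))
      (hu₂ : IsReducedWord n w (k :: u₂)) :
      ((k :: u₁).map f).prod = ((k :: u₂).map f).prod := by
    obtain ⟨hk, hu₁⟩ := isReducedWord_cons_iff.mp hu₁
    obtain ⟨-, hu₂⟩ := isReducedWord_cons_iff.mp hu₂
    have := permLen_adjSwap_mul_add_one hk
    simp only [List.map_cons, List.prod_cons, ih _ (by omega) hu₁ hu₂ rfl]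
  rcases l₁ with _ | ⟨i, t₁⟩ <;> rcases l₂ with _ | ⟨j, t₂⟩
  · rfl
  · simpa using h₁.2.2.trans h₂.2.2.symm
  · simpa using h₁.2.2.trans h₂.2.2.symm
  wlog hij : i ≤ j generalizing i j t₁ t₂
  · exact (this j t₂ h₂ i t₁ h₁ (by omega)).symm
  obtain ⟨hi, -⟩ := isReducedWord_cons_iff.mp h₁
  obtain ⟨hj, -⟩ := isReducedWord_cons_iff.mp h₂
  rcases (show i = j ∨ j = i + 1 ∨ i + 1 < j by omega) with rfl | rfl | hfar
  · exact sameFirst i h₁ h₂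
  · obtain ⟨t, ht₁, ht₂⟩ := exists_isReducedWord_braid hi hj
    calc _ = ((i :: (i + 1) :: i :: t).map f).prod := sameFirst i h₁ ht₁
      _ = (((i + 1) :: i :: (i + 1) :: t).map f).prod := by
        simp only [List.map_cons, List.prod_cons, ← mul_assoc, hbraid i hj.1]
      _ = _ := sameFirst (i + 1) ht₂ h₂
  · obtain ⟨t, ht₁, ht₂⟩ := exists_isReducedWord_comm hfar hi hj
    calc _ = ((i :: j :: t).map f).prod := sameFirst i h₁ ht₁
      _ = ((j :: i :: t).map f).prod := by
        simp only [List.map_cons, List.prod_cons, ← mul_assoc, hcomm i j hfar hj.1]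
      _ = _ := sameFirst j ht₂ h₂

end WordProperty

section DemAt

variable {n i j : ℕ}

theorem demAt_of_lt (hi : i + 1 < n) :
    demAt n i = demazure ⟨i, Nat.lt_of_succ_lt hi⟩ ⟨i + 1, hi⟩ :=
  dif_pos hi

theorem demAt_comm (hij : i + 1 < j) (hj : j + 1 < n) (f : MvPolynomial (Fin n) ℚ) :
    demAt n i (demAt n j f) = demAt n j (demAt n i f) := by
  rw [demAt_of_lt (by omega : i + 1 < n), demAt_of_lt hj]
  exact demazure_comm (by grind) (by grind) (by grind) (by grind) (by grind) (by grind) f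

theorem demAt_braid (hi : i + 2 < n) (f : MvPolynomial (Fin n) ℚ) :
    demAt n i (demAt n (i + 1) (demAt n i f)) =
      demAt n (i + 1) (demAt n i (demAt n (i + 1) f)) := by
  rw [demAt_of_lt (by omega : i + 1 < n), demAt_of_lt hi]
  exact demazure_braid (by grind) (by grind) (by grind) f

theorem demWord_eq_prod (n : ℕ) (l : List ℕ) :
    demWord n l = (l.map (demAt n) : List (Function.End (MvPolynomial (Fin n) ℚ))).prod := by
  induction l with
  | nil => rfl
  | cons i t ih => exact congrArg (demAt n i ∘ ·) ih

end DemAt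

theorem demazure_reduced_word_independent_general (n : ℕ) (w : Equiv.Perm (Fin n))
    (l₁ l₂ : List ℕ) (h₁ : IsReducedWord n w l₁) (h₂ : IsReducedWord n w l₂) :
    demWord n l₁ = demWord n l₂ := by
  rw [demWord_eq_prod, demWord_eq_prod]
  -- in `Function.End`, `*` is composition (on plain functions it would be pointwise)
  exact prod_map_eq_of_isReducedWord (M := Function.End _) (demAt n)
    (fun i j hij hj => funext (demAt_comm hij hj)) (fun i hi => funext (demAt_braid hi)) h₁ h₂

/-- **Independence of the reduced word.**  If `l₁` and `l₂` are two reduced words for the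
same permutation `w` (products of adjacent transpositions of length `ℓ(w)`), then the
corresponding compositions of Demazure operators coincide; hence `∂_w` is well defined. -/
theorem demazure_reduced_word_independent (n : ℕ) (hn : 1 ≤ n) (w : Equiv.Perm (Fin n))
    (l₁ l₂ : List ℕ) (h₁ : IsReducedWord n w l₁) (h₂ : IsReducedWord n w l₂) :
    demWord n l₁ = demWord n l₂ :=
  demazure_reduced_word_independent_general n w l₁ l₂ h₁ h₂
end

section
/- Let n ≥ 1 and let w_0 ∈ S_n be the longest permutation. In ℚ[x_1,…,x_n,t_1,…,t_n], applying the Demazure operator ∂^x_{w_0} (acting on the x-variables only) to the product ∏_{i+j ≤ n} (x_i − t_j) yields the constant polynomial 1. Equivalently, the double Schubert polynomial of the identity permutation is 1: 𝔖_{id}(x,t) = 1. -/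
open MvPolynomial
open scoped Classical

/-!
Each `∂ᵢ` lowers the total degree by at least one and `∏_{i+j≤n} (xᵢ - tⱼ)` has degree `ℓ(w₀)`,
so its image under `∂_{w₀}` is a constant, which we compute by evaluating at `xᵢ = tᵢ = i`.

After inverting the roots `x_a - x_b`, the composite of the `∂ᵢ` along any word becomes an
operator `∑_w c_w w` with coefficients in the localization (`wordCoeff`). For a reduced word of
`v`, `c_w = 0` whenever `ℓ(w) > ℓ(v)`, and `c_v` is `(-1)^ℓ(v)` divided by the product of the roots
over the inversions of `v` (`rootProd`). At the point `xᵢ = tᵢ = i` the polynomial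
`w(∏ (xᵢ - tⱼ))` vanishes for every `w ≠ w₀`, so only `c_{w₀}` contributes, and its value is
exactly the inverse of the value of `w₀(∏ (xᵢ - tⱼ))`.
-/

namespace Schubert

open Finset

section DividedDifference

variable {σ : Type} [DecidableEq σ]

theorem X_sub_X_dvd_sub_rename_swap {R : Type*} [CommRing R] (i j : σ) (f : MvPolynomial σ R) :
    X i - X j ∣ f - rename (Equiv.swap i j) f := by
  set I := Ideal.span {(X i - X j : MvPolynomial σ R)}
  have hmk : (Ideal.Quotient.mkₐ R I).comp (rename (Equiv.swap i j)) = Ideal.Quotient.mkₐ R I := by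
    have hij : Ideal.Quotient.mk I (X i) = Ideal.Quotient.mk I (X j) :=
      Ideal.Quotient.eq.mpr (Ideal.mem_span_singleton_self _)
    ext k
    simp only [AlgHom.comp_apply, rename_X, Ideal.Quotient.mkₐ_eq_mk, Equiv.swap_apply_def]
    split_ifs with hki hkj
    · rw [hki, hij]
    · rw [hkj, hij]
    · rfl
  rw [← Ideal.mem_span_singleton, ← Ideal.Quotient.eq]
  exact (congrArg (fun φ => φ f) hmk).symm

theorem X_sub_X_mul_demazure (i j : σ) (f : MvPolynomial σ ℚ) :
    (X i - X j) * demazure i j f = f - rename (Equiv.swap i j) f := by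
  have h : ∃ g, f - rename (Equiv.swap i j) f = (X i - X j) * g :=
    X_sub_X_dvd_sub_rename_swap i j f
  rw [demazure, dif_pos h]
  exact h.choose_spec.symm

theorem totalDegree_demazure_le {i j : σ} (hij : i ≠ j) (f : MvPolynomial σ ℚ) :
    (demazure i j f).totalDegree ≤ f.totalDegree - 1 := by
  rcases eq_or_ne (demazure i j f) 0 with hg | hg
  · simp [hg]
  have hX : (X i - X j : MvPolynomial σ ℚ) ≠ 0 := sub_ne_zero.mpr (X_injective.ne hij)
  have hX1 : (X i - X j : MvPolynomial σ ℚ).totalDegree = 1 :=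
    ((isHomogeneous_X ℚ i).sub (isHomogeneous_X ℚ j)).totalDegree hX
  have hmul := totalDegree_mul_of_isDomain hX hg
  rw [X_sub_X_mul_demazure, hX1] at hmul
  have hsub := (totalDegree_sub f (rename (Equiv.swap i j) f)).trans
    (max_le le_rfl (totalDegree_rename_le _ f))
  omega

end DividedDifference

section Word

variable {n : ℕ}

theorem demAtX_of_lt {i : ℕ} (h : i + 1 < n) :
    demAtX n i = demazure (Sum.inl (⟨i, by omega⟩ : Fin n)) (Sum.inl ⟨i + 1, h⟩) :=
  dif_pos h

theorem demWordX_cons (i : ℕ) (l : List ℕ) (f : MvPolynomial (Fin n ⊕ Fin n) ℚ) :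
    demWordX n (i :: l) f = demAtX n i (demWordX n l f) :=
  rfl

theorem totalDegree_demWordX_le {l : List ℕ} (hl : ∀ i ∈ l, i + 1 < n)
    (f : MvPolynomial (Fin n ⊕ Fin n) ℚ) :
    (demWordX n l f).totalDegree ≤ f.totalDegree - l.length := by
  induction l with
  | nil => simp [demWordX]
  | cons i l ih =>
    have hi := hl i List.mem_cons_self
    rw [demWordX_cons, demAtX_of_lt hi, List.length_cons]
    have := totalDegree_demazure_le
      (i := Sum.inl (⟨i, by omega⟩ : Fin n)) (j := Sum.inl ⟨i + 1, hi⟩) (by simp) (demWordX n l f)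
    have := ih fun j hj => hl j (List.mem_cons_of_mem i hj)
    omega

end Word

section Length

variable {n : ℕ}

def inversions (v : Equiv.Perm (Fin n)) : Finset (Fin n × Fin n) :=
  univ.filter fun p => p.1 < p.2 ∧ v p.2 < v p.1

@[simp]
theorem mem_inversions {v : Equiv.Perm (Fin n)} {p : Fin n × Fin n} :
    p ∈ inversions v ↔ p.1 < p.2 ∧ v p.2 < v p.1 := by
  simp [inversions]

theorem permLen_eq_card_inversions (v : Equiv.Perm (Fin n)) : permLen v = #(inversions v) :=
  rfl

theorem adjSwap_of_lt {i : ℕ} (h : i + 1 < n) : adjSwap n i = Equiv.swap ⟨i, by omega⟩ ⟨i + 1, h⟩ :=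
  dif_pos h

theorem adjSwap_mul_adjSwap (i : ℕ) : adjSwap n i * adjSwap n i = 1 := by
  unfold adjSwap
  split_ifs
  · exact Equiv.swap_mul_self _ _
  · exact mul_one 1

variable {a b : Fin n}

theorem swap_lt_swap_iff_of_val_eq_succ (hab : (b : ℕ) = a + 1) {x y : Fin n}
    (hxy : ¬(x = a ∧ y = b)) (hyx : ¬(x = b ∧ y = a)) :
    Equiv.swap a b x < Equiv.swap a b y ↔ x < y := by
  simp only [Equiv.swap_apply_def]
  split_ifs <;> simp only [Fin.lt_def, Fin.ext_iff] at * <;> omega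

theorem inversions_swap_mul (hab : (b : ℕ) = a + 1) {v : Equiv.Perm (Fin n)}
    (hv : v⁻¹ a < v⁻¹ b) :
    inversions (Equiv.swap a b * v) = insert (v⁻¹ a, v⁻¹ b) (inversions v) := by
  have hlt : a < b := by simp [Fin.lt_def, hab]
  ext ⟨p, q⟩
  simp only [mem_inversions, mem_insert, Prod.mk.injEq, Equiv.Perm.mul_apply]
  by_cases hab' : v p = a ∧ v q = b
  · obtain ⟨rfl, rfl⟩ : p = v⁻¹ a ∧ q = v⁻¹ b := by simp [← hab'.1, ← hab'.2]
    simpa [hlt] using hv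
  by_cases hba : v p = b ∧ v q = a
  · obtain ⟨rfl, rfl⟩ : p = v⁻¹ b ∧ q = v⁻¹ a := by simp [← hba.1, ← hba.2]
    refine iff_of_false (fun h => hv.not_gt h.1) ?_
    rintro (⟨h, -⟩ | ⟨h, -⟩)
    · exact hv.ne' h
    · exact hv.not_gt h
  have hpq : ¬(p = v⁻¹ a ∧ q = v⁻¹ b) := by
    rintro ⟨rfl, rfl⟩
    simp at hab'
  rw [swap_lt_swap_iff_of_val_eq_succ hab (fun h => hba ⟨h.2, h.1⟩) (fun h => hab' ⟨h.2, h.1⟩)]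
  tauto

theorem mk_inv_notMem_inversions (hab : (b : ℕ) = a + 1) (v : Equiv.Perm (Fin n)) :
    (v⁻¹ a, v⁻¹ b) ∉ inversions v := by
  simp [Fin.le_def, hab]

theorem permLen_swap_mul_of_lt (hab : (b : ℕ) = a + 1) {v : Equiv.Perm (Fin n)}
    (hv : v⁻¹ a < v⁻¹ b) : permLen (Equiv.swap a b * v) = permLen v + 1 := by
  rw [permLen_eq_card_inversions, inversions_swap_mul hab hv,
    card_insert_of_notMem (mk_inv_notMem_inversions hab v), permLen_eq_card_inversions]

theorem permLen_swap_mul_of_gt (hab : (b : ℕ) = a + 1) {v : Equiv.Perm (Fin n)}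
    (hv : v⁻¹ b < v⁻¹ a) : permLen v = permLen (Equiv.swap a b * v) + 1 := by
  have hv' : (Equiv.swap a b * v)⁻¹ a < (Equiv.swap a b * v)⁻¹ b := by
    simpa [Equiv.swap_apply_left, Equiv.swap_apply_right] using hv
  simpa [← mul_assoc] using permLen_swap_mul_of_lt hab hv'

theorem permLen_adjSwap_mul_le (i : ℕ) (v : Equiv.Perm (Fin n)) :
    permLen (adjSwap n i * v) ≤ permLen v + 1 := by
  by_cases h : i + 1 < n
  · rw [adjSwap_of_lt h]
    rcases lt_or_gt_of_ne (v⁻¹.injective.ne (a₁ := ⟨i, by omega⟩) (a₂ := ⟨i + 1, h⟩)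
      (by simp)) with hv | hv
    · exact (permLen_swap_mul_of_lt rfl hv).le
    · have := permLen_swap_mul_of_gt rfl hv
      omega
  · simp [adjSwap, h]

theorem lt_of_permLen_adjSwap_mul {i : ℕ} (h : i + 1 < n) {v : Equiv.Perm (Fin n)}
    (hv : permLen (adjSwap n i * v) = permLen v + 1) :
    v⁻¹ ⟨i, by omega⟩ < v⁻¹ ⟨i + 1, h⟩ := by
  rw [adjSwap_of_lt h] at hv
  refine (lt_or_gt_of_ne (v⁻¹.injective.ne (by simp))).resolve_right fun hgt => ?_
  have := permLen_swap_mul_of_gt rfl hgt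
  omega

theorem inversions_one : inversions (1 : Equiv.Perm (Fin n)) = ∅ :=
  eq_empty_iff_forall_notMem.mpr fun _ hp =>
    lt_asymm (mem_inversions.mp hp).1 (mem_inversions.mp hp).2

theorem permLen_one : permLen (1 : Equiv.Perm (Fin n)) = 0 := by
  rw [permLen_eq_card_inversions, inversions_one, card_empty]

theorem permLen_prod_le (l : List ℕ) : permLen (l.map (adjSwap n)).prod ≤ l.length := by
  induction l with
  | nil => simp [permLen_one]
  | cons i l ih =>
    simpa using (permLen_adjSwap_mul_le i _).trans (Nat.succ_le_succ ih)

theorem inversions_w0 : inversions (w0 n) = univ.filter fun p : Fin n × Fin n => p.1 < p.2 := by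
  ext p
  simp [w0, Fin.rev_lt_rev]

theorem exists_descent_of_ne_one {v : Equiv.Perm (Fin n)} (hv : v ≠ 1) :
    ∃ (i : ℕ) (h : i + 1 < n), v⁻¹ ⟨i + 1, h⟩ < v⁻¹ ⟨i, by omega⟩ := by
  by_contra! hasc
  apply hv
  rcases n with _ | m
  · exact Subsingleton.elim _ _
  have hmono : StrictMono ⇑v⁻¹ := Fin.strictMono_iff_lt_succ.mpr fun i =>
    (hasc i (by omega)).lt_of_ne (v⁻¹.injective.ne (by simp [Fin.ext_iff]))
  have hid : v⁻¹ = 1 := Equiv.ext (congrFun hmono.eq_id)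
  rw [← inv_inv v, hid, inv_one]

theorem exists_isReducedWord (v : Equiv.Perm (Fin n)) : ∃ l, IsReducedWord n v l := by
  induction hk : permLen v using Nat.strong_induction_on generalizing v with
  | _ k ih =>
    by_cases hv : v = 1
    · exact ⟨[], by simp, by simp [hv], by simp [hv, permLen_one]⟩
    obtain ⟨i, h, hdesc⟩ := exists_descent_of_ne_one hv
    have hlen := permLen_swap_mul_of_gt (a := ⟨i, by omega⟩) rfl hdesc
    rw [← adjSwap_of_lt h] at hlen
    obtain ⟨l, hl, hprod, hlength⟩ := ih _ (by omega) (adjSwap n i * v) rfl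
    refine ⟨i :: l, ?_, ?_, ?_⟩
    · simpa [h] using hl
    · simp [hprod, ← mul_assoc, adjSwap_mul_adjSwap]
    · simp [hlength, hlen]

end Length

section Action

variable {n : ℕ}

noncomputable def permX (w : Equiv.Perm (Fin n)) :
    MvPolynomial (Fin n ⊕ Fin n) ℚ →ₐ[ℚ] MvPolynomial (Fin n ⊕ Fin n) ℚ :=
  rename (Sum.map w id)

theorem permX_mul (u w : Equiv.Perm (Fin n)) (f : MvPolynomial (Fin n ⊕ Fin n) ℚ) :
    permX (u * w) f = permX u (permX w f) := by
  simp only [permX, rename_rename, Sum.map_comp_map, Function.comp_id, Equiv.Perm.coe_mul]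

theorem permX_one (f : MvPolynomial (Fin n ⊕ Fin n) ℚ) : permX 1 f = f := by
  simp [permX]

theorem rename_swap_inl (a b : Fin n) :
    rename (Equiv.swap (Sum.inl a : Fin n ⊕ Fin n) (Sum.inl b)) = permX (Equiv.swap a b) := by
  rw [permX, ← Equiv.Perm.sumCongr_swap_refl]
  rfl

end Action

section Localization

variable {n : ℕ}

variable (n) in
noncomputable def rootSubmonoid : Submonoid (MvPolynomial (Fin n ⊕ Fin n) ℚ) :=
  Submonoid.closure {f | ∃ a b : Fin n, a ≠ b ∧ X (Sum.inl a) - X (Sum.inl b) = f}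

variable (n) in
abbrev RootLocalization := Localization (rootSubmonoid n)

theorem X_sub_X_mem_rootSubmonoid {a b : Fin n} (hab : a ≠ b) :
    X (Sum.inl a) - X (Sum.inl b) ∈ rootSubmonoid n :=
  Submonoid.subset_closure ⟨a, b, hab, rfl⟩

theorem rootSubmonoid_le_comap_permX (w : Equiv.Perm (Fin n)) :
    rootSubmonoid n ≤ (rootSubmonoid n).comap (permX w).toRingHom := by
  refine Submonoid.closure_le.mpr ?_
  rintro _ ⟨a, b, hab, rfl⟩
  simpa [permX] using X_sub_X_mem_rootSubmonoid (w.injective.ne hab)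

noncomputable def permLoc (w : Equiv.Perm (Fin n)) : RootLocalization n →+* RootLocalization n :=
  IsLocalization.map _ (permX w).toRingHom (rootSubmonoid_le_comap_permX w)

theorem permLoc_algebraMap (w : Equiv.Perm (Fin n)) (f : MvPolynomial (Fin n ⊕ Fin n) ℚ) :
    permLoc w (algebraMap _ _ f) = algebraMap _ (RootLocalization n) (permX w f) :=
  IsLocalization.map_eq _ _

theorem permLoc_mul (u w : Equiv.Perm (Fin n)) :
    permLoc (u * w) = (permLoc u).comp (permLoc w) :=
  IsLocalization.ringHom_ext (rootSubmonoid n) <| RingHom.ext fun f => by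
    simp [permLoc_algebraMap, permX_mul]

theorem permLoc_one : permLoc (1 : Equiv.Perm (Fin n)) = RingHom.id _ :=
  IsLocalization.ringHom_ext (rootSubmonoid n) <| RingHom.ext fun f => by
    simp [permLoc_algebraMap, permX_one]

variable (n) in
noncomputable def rootInv (i : ℕ) : RootLocalization n :=
  if h : i + 1 < n then
    Ring.inverse (algebraMap (MvPolynomial (Fin n ⊕ Fin n) ℚ) _
      (X (Sum.inl ⟨i, by omega⟩) - X (Sum.inl ⟨i + 1, h⟩)))
  else 0

theorem algebraMap_mul_rootInv {i : ℕ} (h : i + 1 < n) :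
    algebraMap (MvPolynomial (Fin n ⊕ Fin n) ℚ) (RootLocalization n)
      (X (Sum.inl ⟨i, by omega⟩) - X (Sum.inl ⟨i + 1, h⟩)) * rootInv n i = 1 := by
  rw [rootInv, dif_pos h]
  exact Ring.mul_inverse_cancel _
    (IsLocalization.map_units _ ⟨_, X_sub_X_mem_rootSubmonoid (by simp [Fin.ext_iff])⟩)

theorem algebraMap_demAtX {i : ℕ} (h : i + 1 < n) (f : MvPolynomial (Fin n ⊕ Fin n) ℚ) :
    algebraMap _ (RootLocalization n) (demAtX n i f)
      = rootInv n i * (algebraMap _ _ f - permLoc (adjSwap n i) (algebraMap _ _ f)) := by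
  rw [permLoc_algebraMap, ← map_sub, adjSwap_of_lt h, ← rename_swap_inl, ← X_sub_X_mul_demazure,
    demAtX_of_lt h, map_mul, ← mul_assoc, mul_comm (rootInv n i), algebraMap_mul_rootInv h, one_mul]

variable (n) in
noncomputable def wordCoeff : List ℕ → Equiv.Perm (Fin n) → RootLocalization n
  | [], w => if w = 1 then 1 else 0
  | i :: l, w =>
    rootInv n i * (wordCoeff l w - permLoc (adjSwap n i) (wordCoeff l (adjSwap n i * w)))

theorem algebraMap_demWordX {l : List ℕ} (hl : ∀ i ∈ l, i + 1 < n)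
    (f : MvPolynomial (Fin n ⊕ Fin n) ℚ) :
    algebraMap _ (RootLocalization n) (demWordX n l f)
      = ∑ w, wordCoeff n l w * permLoc w (algebraMap _ _ f) := by
  induction l with
  | nil => simp [demWordX, wordCoeff, permLoc_one]
  | cons i l ih =>
    set s := adjSwap n i
    have hshift : ∑ w, permLoc s (wordCoeff n l w * permLoc w (algebraMap _ _ f))
        = ∑ w, permLoc s (wordCoeff n l (s * w)) * permLoc w (algebraMap _ _ f) := by
      refine Fintype.sum_equiv (Equiv.mulLeft s) _ _ fun w => ?_
      simp [s, permLoc_mul, ← mul_assoc, adjSwap_mul_adjSwap]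
    rw [demWordX_cons, algebraMap_demAtX (hl i List.mem_cons_self),
      ih fun j hj => hl j (List.mem_cons_of_mem i hj), map_sum, hshift, ← sum_sub_distrib,
      mul_sum]
    refine sum_congr rfl fun w _ => ?_
    rw [wordCoeff]
    ring

theorem wordCoeff_eq_zero_of_length_lt (l : List ℕ) {w : Equiv.Perm (Fin n)}
    (hw : l.length < permLen w) : wordCoeff n l w = 0 := by
  induction l generalizing w with
  | nil =>
    have : w ≠ 1 := by rintro rfl; simp [permLen_one] at hw
    simp [wordCoeff, this]
  | cons i l ih =>
    have hsw : permLen w ≤ permLen (adjSwap n i * w) + 1 := by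
      simpa [← mul_assoc, adjSwap_mul_adjSwap] using permLen_adjSwap_mul_le i (adjSwap n i * w)
    simp only [List.length_cons] at hw
    rw [wordCoeff, ih (by omega), ih (by omega), map_zero, sub_zero, mul_zero]

end Localization

section TopCoefficient

variable {n : ℕ}

noncomputable def rootProd (v : Equiv.Perm (Fin n)) : MvPolynomial (Fin n ⊕ Fin n) ℚ :=
  ∏ p ∈ inversions v, (X (Sum.inl (v p.2)) - X (Sum.inl (v p.1)))

theorem rootProd_one : rootProd (1 : Equiv.Perm (Fin n)) = 1 := by
  rw [rootProd, inversions_one, prod_empty]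

theorem rootProd_adjSwap_mul {i : ℕ} (h : i + 1 < n) {v : Equiv.Perm (Fin n)}
    (hv : v⁻¹ ⟨i, by omega⟩ < v⁻¹ ⟨i + 1, h⟩) :
    rootProd (adjSwap n i * v) =
      (X (Sum.inl ⟨i, by omega⟩) - X (Sum.inl ⟨i + 1, h⟩)) * permX (adjSwap n i) (rootProd v) := by
  rw [rootProd, adjSwap_of_lt h, inversions_swap_mul rfl hv,
    prod_insert (mk_inv_notMem_inversions rfl v), rootProd, map_prod]
  congr 1
  · simp
  · exact prod_congr rfl fun p _ => by simp [permX]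

theorem algebraMap_rootProd_mul_wordCoeff {l : List ℕ} (hl : ∀ i ∈ l, i + 1 < n)
    (hred : l.length = permLen (l.map (adjSwap n)).prod) :
    algebraMap _ (RootLocalization n) (rootProd (l.map (adjSwap n)).prod)
      * wordCoeff n l (l.map (adjSwap n)).prod = (-1) ^ l.length := by
  induction l with
  | nil => simp [rootProd_one, wordCoeff]
  | cons i l ih =>
    have hi := hl i List.mem_cons_self
    simp only [List.map_cons, List.prod_cons, List.length_cons] at hred ⊢
    set v := (l.map (adjSwap n)).prod
    have hv : permLen v = l.length := by
      have : permLen v ≤ l.length := permLen_prod_le l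
      have := permLen_adjSwap_mul_le i v
      omega
    have hvanish : wordCoeff n l (adjSwap n i * v) = 0 :=
      wordCoeff_eq_zero_of_length_lt l (by omega)
    have ih' := ih (fun j hj => hl j (List.mem_cons_of_mem i hj)) hv.symm
    have hback : adjSwap n i * (adjSwap n i * v) = v := by
      rw [← mul_assoc, adjSwap_mul_adjSwap, one_mul]
    rw [wordCoeff, hvanish, hback,
      rootProd_adjSwap_mul hi (lt_of_permLen_adjSwap_mul hi (by omega)), map_mul,
      ← permLoc_algebraMap]
    calc _ = -(algebraMap (MvPolynomial (Fin n ⊕ Fin n) ℚ) _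
              (X (Sum.inl ⟨i, by omega⟩) - X (Sum.inl ⟨i + 1, hi⟩)) * rootInv n i)
            * permLoc (adjSwap n i) (algebraMap _ _ (rootProd v) * wordCoeff n l v) := by
          rw [map_mul]; ring
      _ = (-1) ^ (l.length + 1) := by
          rw [algebraMap_mul_rootInv hi, ih', map_pow, map_neg, map_one, pow_succ]; ring

end TopCoefficient

section Evaluation

variable {n : ℕ}

variable (n) in
noncomputable def evalDiag : MvPolynomial (Fin n ⊕ Fin n) ℚ →ₐ[ℚ] ℚ :=
  aeval (Sum.elim (fun a : Fin n => ((a : ℕ) : ℚ)) fun a => ((a : ℕ) : ℚ))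

theorem rootSubmonoid_le_comap_evalDiag :
    rootSubmonoid n ≤ (IsUnit.submonoid ℚ).comap (evalDiag n) := by
  refine Submonoid.closure_le.mpr ?_
  rintro _ ⟨a, b, hab, rfl⟩
  simp [IsUnit.mem_submonoid_iff, evalDiag, sub_eq_zero, Fin.val_injective.ne hab]

variable (n) in
noncomputable def evalLoc : RootLocalization n →+* ℚ :=
  IsLocalization.lift (M := rootSubmonoid n) (g := (evalDiag n).toRingHom) fun y =>
    (IsUnit.mem_submonoid_iff _).mp (rootSubmonoid_le_comap_evalDiag y.2)

theorem evalLoc_algebraMap (f : MvPolynomial (Fin n ⊕ Fin n) ℚ) :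
    evalLoc n (algebraMap _ _ f) = evalDiag n f :=
  IsLocalization.lift_eq _ f

theorem exists_apply_lt_rev {w : Equiv.Perm (Fin n)} (hw : w ≠ w0 n) : ∃ i, w i < i.rev := by
  by_contra! h
  have hsum : ∑ i : Fin n, ((i.rev : Fin n) : ℕ) = ∑ i, ((w i : Fin n) : ℕ) :=
    (Equiv.sum_comp Fin.revPerm (fun j => (j : ℕ))).trans
      (Equiv.sum_comp w (fun j => (j : ℕ))).symm
  refine hw (Equiv.ext fun i => Fin.ext ?_)
  exact ((sum_eq_sum_iff_of_le fun i _ => Fin.le_def.mp (h i)).mp hsum i (mem_univ i)).symm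

theorem evalDiag_permX_schubProd_of_ne {w : Equiv.Perm (Fin n)} (hw : w ≠ w0 n) :
    evalDiag n (permX w (schubProd n)) = 0 := by
  obtain ⟨i, hi⟩ := exists_apply_lt_rev hw
  rw [schubProd, map_prod, map_prod]
  refine prod_eq_zero (i := (i, w i)) ?_ (by simp [permX, evalDiag])
  simp only [mem_filter, mem_univ, true_and]
  have := Fin.val_rev i
  rw [Fin.lt_def] at hi
  omega

def revSwap : Fin n × Fin n ≃ Fin n × Fin n :=
  (Equiv.prodComm _ _).trans (Fin.revPerm.prodCongr (Equiv.refl _))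

theorem filter_add_two_le_eq_map_revSwap :
    univ.filter (fun p : Fin n × Fin n => (p.1 : ℕ) + (p.2 : ℕ) + 2 ≤ n)
      = (univ.filter fun p : Fin n × Fin n => p.1 < p.2).map revSwap.toEmbedding := by
  ext ⟨i, j⟩
  simp only [mem_filter, mem_univ, true_and, mem_map_equiv]
  simp [revSwap, Fin.lt_def, Fin.val_rev]
  omega

theorem totalDegree_schubProd_le : (schubProd n).totalDegree ≤ permLen (w0 n) := by
  rw [permLen_eq_card_inversions, inversions_w0, ← card_map revSwap.toEmbedding,
    ← filter_add_two_le_eq_map_revSwap, card_eq_sum_ones]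
  refine (totalDegree_finsetProd _ _).trans (sum_le_sum fun p _ => ?_)
  exact (totalDegree_sub _ _).trans (by simp [totalDegree_X])

theorem evalDiag_permX_w0_schubProd :
    evalDiag n (permX (w0 n) (schubProd n))
      = ∏ p ∈ univ.filter (fun p : Fin n × Fin n => p.1 < p.2), (((p.2 : ℕ) : ℚ) - p.1) := by
  rw [schubProd, map_prod, map_prod, filter_add_two_le_eq_map_revSwap, prod_map]
  exact prod_congr rfl fun p _ => by simp [permX, evalDiag, revSwap, w0]

theorem evalDiag_rootProd_w0 :
    evalDiag n (rootProd (w0 n))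
      = (-1) ^ permLen (w0 n)
        * ∏ p ∈ univ.filter (fun p : Fin n × Fin n => p.1 < p.2), (((p.2 : ℕ) : ℚ) - p.1) := by
  rw [rootProd, map_prod, permLen_eq_card_inversions, inversions_w0, ← prod_const,
    ← prod_mul_distrib]
  exact prod_congr rfl fun p _ => by simp [evalDiag, w0]

end Evaluation

theorem demWordX_schubProd_eq_one {n : ℕ} {l : List ℕ} (hl : IsReducedWord n (w0 n) l) :
    demWordX n l (schubProd n) = 1 := by
  obtain ⟨hin, hprod, hlen⟩ := hl
  set P : ℚ := ∏ p ∈ univ.filter (fun p : Fin n × Fin n => p.1 < p.2), (((p.2 : ℕ) : ℚ) - p.1)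
  set e := evalLoc n (wordCoeff n l (w0 n))
  have hconst : (demWordX n l (schubProd n)).totalDegree = 0 := by
    have := totalDegree_demWordX_le hin (schubProd n)
    have := totalDegree_schubProd_le (n := n)
    omega
  have heval : evalDiag n (demWordX n l (schubProd n)) = e * P := by
    rw [← evalLoc_algebraMap, algebraMap_demWordX hin, map_sum, sum_eq_single (w0 n)]
    · rw [map_mul, permLoc_algebraMap, evalLoc_algebraMap, evalDiag_permX_w0_schubProd]
    · intro w _ hw
      rw [map_mul, permLoc_algebraMap, evalLoc_algebraMap, evalDiag_permX_schubProd_of_ne hw,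
        mul_zero]
    · simp
  have htop := congrArg (evalLoc n)
    (algebraMap_rootProd_mul_wordCoeff hin (by rw [hprod]; exact hlen))
  rw [hprod, map_mul, evalLoc_algebraMap, evalDiag_rootProd_w0, map_pow, map_neg, map_one,
    hlen, mul_assoc] at htop
  have hone : P * e = 1 :=
    mul_left_cancel₀ (pow_ne_zero _ (neg_ne_zero.mpr one_ne_zero)) (htop.trans (mul_one _).symm)
  rw [totalDegree_eq_zero_iff_eq_C.mp hconst] at heval ⊢
  rw [algHom_C, Algebra.algebraMap_self, RingHom.id_apply, mul_comm, hone] at heval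
  rw [heval, C_1]

end Schubert

theorem schubert_id_eq_one_general (n : ℕ) :
    demazureOfX n (w0 n) (schubProd n) = 1 ∧ schubert n 1 = 1 := by
  have hw0 : demazureOfX n (w0 n) (schubProd n) = 1 := by
    have hex := Schubert.exists_isReducedWord (w0 n)
    rw [demazureOfX, dif_pos hex]
    exact Schubert.demWordX_schubProd_eq_one hex.choose_spec
  refine ⟨hw0, ?_⟩
  rwa [schubert, inv_one, one_mul]

/-- Applying `∂ˣ_{w₀}` to `∏_{i+j≤n} (xᵢ - tⱼ)` yields `1`; equivalently, the double
Schubert polynomial of the identity permutation is `1`. -/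
theorem schubert_id_eq_one (n : ℕ) (hn : 1 ≤ n) :
    demazureOfX n (w0 n) (schubProd n) = 1 ∧ schubert n 1 = 1 :=
  schubert_id_eq_one_general n
end
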